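/- L² law of large numbers for quadratic forms with uniformly bounded matrices. For each n, let B_n be an n×n real matrix with ‖B_n‖_1 ≤ c and ‖B_n‖_∞ ≤ c for a constant c not depending on n, and let V_n = (v_1,…,v_n)' have i.i.d. entries with E v_i = 0, E v_i² = σ², E v_i⁴ = μ4 < ∞. Then Var(V_n'B_nV_n) ≤ (|μ4 − 3σ⁴| + 2σ⁴)·c²·n, so E[((1/n)(V_n'B_nV_n − σ²·tr B_n))²] ≤ (|μ4 − 3σ⁴| + 2σ⁴)·c²/n → 0; in particular (1/n)(V_n'B_nV_n − σ²·tr B_n) converges to 0 in probability as n → ∞. -/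

import Mathlib

/-!
Write `Q = V'BV = ∑ᵢⱼ Bᵢⱼ vᵢ vⱼ`. By independence, `E[vᵢ vⱼ vₖ vₗ]` is the product over the
distinct indices of the moments `E[vₐ^(multiplicity of a)]`, which gives
`Cov(vᵢvⱼ, vₖvₗ) = (μ₄ - 3σ⁴)[i = j = k = l] + σ⁴([i = k][j = l] + [i = l][j = k])` and hence
`Var Q = (μ₄ - 3σ⁴) ∑ᵢ Bᵢᵢ² + σ⁴ (tr BB + tr B'B)`. Both `∑ᵢ Bᵢᵢ²` and `tr BB` are at most
`tr B'B = ∑ᵢⱼ Bᵢⱼ² ≤ n ‖B‖_∞²`, which is the variance bound. Dividing by `n²` gives the `L²` bound,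
and `L²` convergence implies convergence in probability.
-/

open Matrix MeasureTheory ProbabilityTheory Filter Topology

/-- Maximum absolute row-sum norm `‖·‖_∞`. -/
noncomputable def rowSumNorm {m n : Type*} [Fintype n] (A : Matrix m n ℝ) : ℝ :=
  ⨆ i, ∑ j, |A i j|

/-- Maximum absolute column-sum norm `‖·‖_1`. -/
noncomputable def colSumNorm {m n : Type*} [Fintype m] (A : Matrix m n ℝ) : ℝ :=
  ⨆ j, ∑ i, |A i j|

open scoped ENNReal

section RowSumNorm

variable {m n : Type*} [Fintype n]

theorem sum_abs_le_rowSumNorm [Finite m] (A : Matrix m n ℝ) (i : m) :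
    ∑ j, |A i j| ≤ rowSumNorm A :=
  le_ciSup (f := fun i => ∑ j, |A i j|) (Set.finite_range _).bddAbove i

theorem rowSumNorm_nonneg (A : Matrix m n ℝ) : 0 ≤ rowSumNorm A :=
  Real.iSup_nonneg fun _ => Finset.sum_nonneg fun _ _ => abs_nonneg _

theorem sum_sum_sq_le_card_mul_rowSumNorm_sq [Fintype m] (A : Matrix m n ℝ) :
    ∑ i, ∑ j, A i j ^ 2 ≤ Fintype.card m * rowSumNorm A ^ 2 := by
  calc ∑ i, ∑ j, A i j ^ 2 = ∑ i, ∑ j, |A i j| ^ 2 := by simp_rw [sq_abs]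
    _ ≤ ∑ _i : m, rowSumNorm A ^ 2 := Finset.sum_le_sum fun i _ =>
        (Finset.sum_sq_le_sq_sum_of_nonneg fun _ _ => abs_nonneg _).trans <|
          pow_le_pow_left₀ (Finset.sum_nonneg fun _ _ => abs_nonneg _)
            (sum_abs_le_rowSumNorm A i) 2
    _ = Fintype.card m * rowSumNorm A ^ 2 := by simp

end RowSumNorm

section Trace

variable {κ : Type*} [Fintype κ] (B : Matrix κ κ ℝ)

theorem trace_transpose_mul_self_eq : trace (Bᵀ * B) = ∑ i, ∑ j, B i j ^ 2 := by
  rw [trace_mul_comm]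
  simp [trace, mul_apply, sq]

theorem trace_transpose_mul_self_le {c : ℝ} (hB : rowSumNorm B ≤ c) :
    trace (Bᵀ * B) ≤ c ^ 2 * Fintype.card κ := by
  rw [trace_transpose_mul_self_eq, mul_comm]
  exact (sum_sum_sq_le_card_mul_rowSumNorm_sq B).trans <| by
    gcongr
    exact rowSumNorm_nonneg B

theorem sum_diag_sq_le_trace_transpose_mul_self : ∑ i, B i i ^ 2 ≤ trace (Bᵀ * B) := by
  rw [trace_transpose_mul_self_eq]
  exact Finset.sum_le_sum fun i _ =>
    Finset.single_le_sum (f := fun j => B i j ^ 2) (fun _ _ => sq_nonneg _) (Finset.mem_univ i)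

theorem trace_mul_self_le_trace_transpose_mul_self : trace (B * B) ≤ trace (Bᵀ * B) := by
  suffices 2 * trace (B * B) ≤ 2 * trace (Bᵀ * B) by linarith
  calc 2 * trace (B * B) = ∑ i, ∑ j, 2 * B i j * B j i := by
        simp [trace, mul_apply, Finset.mul_sum, mul_assoc]
    _ ≤ ∑ i, ∑ j, (B i j ^ 2 + B j i ^ 2) := by
        gcongr with i _ j _
        exact two_mul_le_add_sq _ _
    _ = 2 * trace (Bᵀ * B) := by
        rw [trace_transpose_mul_self_eq, two_mul]
        simp only [Finset.sum_add_distrib]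
        rw [Finset.sum_comm (f := fun i j => B j i ^ 2)]

end Trace

theorem Matrix.dotProduct_mulVec_self {κ R : Type*} [Fintype κ] [CommSemiring R]
    (A : Matrix κ κ R) (x : κ → R) : x ⬝ᵥ A *ᵥ x = ∑ p : κ × κ, A p.1 p.2 * (x p.1 * x p.2) := by
  simp only [dotProduct, mulVec, Finset.mul_sum, Fintype.sum_prod_type]
  exact Finset.sum_congr rfl fun i _ => Finset.sum_congr rfl fun j _ => by ring

/-- `F a k` stands for `E[vₐᵏ]`, so that for independent `vₐ` the left side is `Cov(vᵢvⱼ, vₖvₗ)`.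
A multiplicity `3` always comes with a multiplicity `1`, so `F a 3` never matters. -/
theorem prod_count_quadruple_sub {κ R : Type*} [DecidableEq κ] [CommRing R] {m2 m4 : R}
    {F : κ → ℕ → R} (h1 : ∀ a, F a 1 = 0) (h2 : ∀ a, F a 2 = m2) (h4 : ∀ a, F a 4 = m4)
    (i j k l : κ) :
    ∏ a ∈ ({i, j, k, l} : Multiset κ).toFinset, F a (({i, j, k, l} : Multiset κ).count a)
      - (∏ a ∈ ({i, j} : Multiset κ).toFinset, F a (({i, j} : Multiset κ).count a))
        * ∏ a ∈ ({k, l} : Multiset κ).toFinset, F a (({k, l} : Multiset κ).count a)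
      = (if i = j ∧ j = k ∧ k = l then m4 - 3 * m2 ^ 2 else 0)
        + m2 ^ 2 * ((if i = k ∧ j = l then 1 else 0) + (if i = l ∧ j = k then 1 else 0)) := by
  by_cases hij : i = j <;> by_cases hik : i = k <;> by_cases hil : i = l <;>
    by_cases hjk : j = k <;> by_cases hjl : j = l <;> by_cases hkl : k = l <;>
    subst_vars <;> simp [Multiset.count_cons, Finset.prod_insert, eq_comm, *] <;> ring

theorem MeasureTheory.MemLp.mul_of_four {Ω : Type*} [MeasurableSpace Ω] {μ : Measure Ω}
    {f g : Ω → ℝ} (hf : MemLp f 4 μ) (hg : MemLp g 4 μ) : MemLp (fun ω => f ω * g ω) 2 μ :=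
  haveI : ENNReal.HolderTriple 4 4 2 := ⟨by
    rw [show (4 : ℝ≥0∞) = 2 * 2 by norm_num, ENNReal.mul_inv (by simp) (by simp), ← add_mul,
      ENNReal.inv_two_add_inv_two, one_mul]⟩
  hg.mul' hf

namespace ProbabilityTheory

variable {Ω κ : Type*} [MeasurableSpace Ω] {μ : Measure Ω} {w : κ → Ω → ℝ}

theorem iIndepFun.integral_finset_prod_pow (hw : iIndepFun w μ)
    (hmeas : ∀ a, AEMeasurable (w a) μ) (s : Finset κ) (k : κ → ℕ) :
    ∫ ω, ∏ a ∈ s, w a ω ^ k a ∂μ = ∏ a ∈ s, ∫ ω, w a ω ^ k a ∂μ := by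
  have hs : iIndepFun (fun a : s => w a) μ := hw.precomp Subtype.val_injective
  have := iIndepFun.integral_fun_prod_comp (X := fun a : s => w a) (f := fun a x => x ^ k a) hs
    (fun a => hmeas a) (fun a => (continuous_pow _).aestronglyMeasurable)
  simp_rw [← Finset.prod_coe_sort s]
  exact this

theorem iIndepFun.integral_multiset_prod [DecidableEq κ] (hw : iIndepFun w μ)
    (hmeas : ∀ a, AEMeasurable (w a) μ) (m : Multiset κ) :
    ∫ ω, (m.map (w · ω)).prod ∂μ = ∏ a ∈ m.toFinset, ∫ ω, w a ω ^ m.count a ∂μ := by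
  simp_rw [Finset.prod_multiset_map_count]
  exact hw.integral_finset_prod_pow hmeas _ _

theorem memLp_dotProduct_mulVec [Fintype κ] (hL4 : ∀ a, MemLp (w a) 4 μ)
    (B : Matrix κ κ ℝ) : MemLp (fun ω => (w · ω) ⬝ᵥ B *ᵥ (w · ω)) 2 μ := by
  simp_rw [dotProduct_mulVec_self]
  exact memLp_finsetSum _ (f := fun (p : κ × κ) ω => B p.1 p.2 * (w p.1 ω * w p.2 ω)) fun p _ =>
    ((hL4 p.1).mul_of_four (hL4 p.2)).const_mul _

section Moments

variable [DecidableEq κ] {σ2 μ4 : ℝ} (hw : iIndepFun w μ)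
  (hL4 : ∀ a, MemLp (w a) 4 μ) (hmean : ∀ a, ∫ ω, w a ω ∂μ = 0)
  (hvar : ∀ a, ∫ ω, w a ω ^ 2 ∂μ = σ2)
include hw hL4 hmean hvar

theorem iIndepFun.integral_mul (i j : κ) :
    ∫ ω, w i ω * w j ω ∂μ = if i = j then σ2 else 0 := by
  by_cases hij : i = j
  · subst hij
    simp [← sq, hvar]
  · have h := hw.integral_multiset_prod (fun a => (hL4 a).aestronglyMeasurable.aemeasurable)
      {i, j}
    simpa [hij, Finset.prod_pair hij, Ne.symm hij, hmean] using h

variable [IsProbabilityMeasure μ]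

theorem iIndepFun.covariance_mul_mul (hm4 : ∀ a, ∫ ω, w a ω ^ 4 ∂μ = μ4) (i j k l : κ) :
    cov[fun ω => w i ω * w j ω, fun ω => w k ω * w l ω; μ] =
      (if i = j ∧ j = k ∧ k = l then μ4 - 3 * σ2 ^ 2 else 0)
        + σ2 ^ 2 * ((if i = k ∧ j = l then 1 else 0) + (if i = l ∧ j = k then 1 else 0)) := by
  have hprod := hw.integral_multiset_prod fun a => (hL4 a).aestronglyMeasurable.aemeasurable
  rw [covariance_eq_sub ((hL4 i).mul_of_four (hL4 j)) ((hL4 k).mul_of_four (hL4 l)),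
    ← prod_count_quadruple_sub (F := fun a n => ∫ ω, w a ω ^ n ∂μ) (by simpa using hmean) hvar hm4,
    ← hprod, ← hprod, ← hprod]
  simp [mul_assoc]

variable [Fintype κ] (B : Matrix κ κ ℝ)

theorem integral_dotProduct_mulVec : ∫ ω, (w · ω) ⬝ᵥ B *ᵥ (w · ω) ∂μ = σ2 * trace B := by
  simp_rw [dotProduct_mulVec_self]
  rw [integral_finsetSum _ fun p _ => (((hL4 p.1).mul_of_four (hL4 p.2)).integrable
    one_le_two).const_mul _]
  simp [integral_const_mul, hw.integral_mul hL4 hmean hvar, Fintype.sum_prod_type, trace,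
    Finset.mul_sum, mul_comm]

theorem variance_dotProduct_mulVec (hm4 : ∀ a, ∫ ω, w a ω ^ 4 ∂μ = μ4) :
    Var[fun ω => (w · ω) ⬝ᵥ B *ᵥ (w · ω); μ] =
      (μ4 - 3 * σ2 ^ 2) * ∑ i, B i i ^ 2 + σ2 ^ 2 * (trace (B * B) + trace (Bᵀ * B)) := by
  simp_rw [dotProduct_mulVec_self]
  rw [variance_fun_sum (X := fun (p : κ × κ) ω => B p.1 p.2 * (w p.1 ω * w p.2 ω))
    fun p => ((hL4 p.1).mul_of_four (hL4 p.2)).const_mul _]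
  simp_rw [covariance_const_mul_left, covariance_const_mul_right,
    hw.covariance_mul_mul hL4 hmean hvar hm4]
  rw [trace_mul_comm Bᵀ]
  simp only [ite_and, mul_add, mul_ite, mul_one, mul_zero, Finset.sum_add_distrib,
    Finset.sum_ite_irrel, Fintype.sum_prod_type, Finset.sum_ite_eq, Finset.mem_univ, ↓reduceIte,
    Finset.sum_const_zero, Finset.mul_sum, trace, diag_apply, mul_apply, transpose_apply]
  simp only [sq, mul_assoc, mul_comm, mul_left_comm, add_comm]

theorem variance_dotProduct_mulVec_le (hm4 : ∀ a, ∫ ω, w a ω ^ 4 ∂μ = μ4) {c : ℝ}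
    (hB : rowSumNorm B ≤ c) :
    Var[fun ω => (w · ω) ⬝ᵥ B *ᵥ (w · ω); μ] ≤
      (|μ4 - 3 * σ2 ^ 2| + 2 * σ2 ^ 2) * c ^ 2 * Fintype.card κ := by
  rw [variance_dotProduct_mulVec hw hL4 hmean hvar B hm4]
  have hdiag := sum_diag_sq_le_trace_transpose_mul_self B
  have hsq := trace_mul_self_le_trace_transpose_mul_self B
  have hT := trace_transpose_mul_self_le B hB
  have hdiag0 : 0 ≤ ∑ i, B i i ^ 2 := Finset.sum_nonneg fun _ _ => sq_nonneg _
  calc (μ4 - 3 * σ2 ^ 2) * ∑ i, B i i ^ 2 + σ2 ^ 2 * (trace (B * B) + trace (Bᵀ * B))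
      ≤ |μ4 - 3 * σ2 ^ 2| * trace (Bᵀ * B) + σ2 ^ 2 * (2 * trace (Bᵀ * B)) := by
        gcongr ?_ + ?_
        · exact (mul_le_mul_of_nonneg_right (le_abs_self _) hdiag0).trans
            (mul_le_mul_of_nonneg_left hdiag (abs_nonneg _))
        · exact mul_le_mul_of_nonneg_left (by linarith) (sq_nonneg _)
    _ = (|μ4 - 3 * σ2 ^ 2| + 2 * σ2 ^ 2) * trace (Bᵀ * B) := by ring
    _ ≤ (|μ4 - 3 * σ2 ^ 2| + 2 * σ2 ^ 2) * c ^ 2 * Fintype.card κ := by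
        rw [mul_assoc]
        gcongr

end Moments

end ProbabilityTheory

section Convergence

variable {Ω : Type*} [MeasurableSpace Ω] {μ : Measure Ω}

theorem integral_sq_const_mul_sub_integral {X : Ω → ℝ} (hX : AEMeasurable X μ) (a : ℝ) :
    ∫ ω, (a * (X ω - μ[X])) ^ 2 ∂μ = a ^ 2 * Var[X; μ] := by
  rw [variance_eq_integral hX, ← integral_const_mul]
  simp_rw [mul_pow]

theorem tendstoInMeasure_zero_of_tendsto_integral_sq {ι : Type*} {l : Filter ι}
    {Y : ι → Ω → ℝ} (hY : ∀ n, MemLp (Y n) 2 μ)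
    (h : Tendsto (fun n => ∫ ω, Y n ω ^ 2 ∂μ) l (𝓝 0)) : TendstoInMeasure μ Y l 0 := by
  refine tendstoInMeasure_of_tendsto_eLpNorm two_ne_zero (fun n => (hY n).1)
    aestronglyMeasurable_const ?_
  have hnorm n : eLpNorm (Y n - 0) 2 μ = ENNReal.ofReal ((∫ ω, Y n ω ^ 2 ∂μ) ^ (2⁻¹ : ℝ)) := by
    rw [sub_zero, (hY n).eLpNorm_eq_integral_rpow_norm two_ne_zero ENNReal.ofNat_ne_top]
    simp
  simp_rw [hnorm]
  simpa using ENNReal.tendsto_ofReal (h.rpow_const (Or.inr (by norm_num : (0 : ℝ) ≤ 2⁻¹)))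

end Convergence

theorem lln_quadratic_forms_general
    {Ω : Type*} [MeasureSpace Ω] [IsProbabilityMeasure (volume : Measure Ω)]
    (v : ℕ → Ω → ℝ) (σ2 μ4 c : ℝ)
    (hindep : iIndepFun v volume)
    (hL4 : ∀ i, MemLp (v i) 4 volume)
    (hmean : ∀ i, (∫ ω, v i ω) = 0)
    (hvar : ∀ i, (∫ ω, (v i ω) ^ 2) = σ2)
    (hm4 : ∀ i, (∫ ω, (v i ω) ^ 4) = μ4)
    (B : (n : ℕ) → Matrix (Fin n) (Fin n) ℝ)
    (hBinf : ∀ n, rowSumNorm (B n) ≤ c) :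
    let Qf : (n : ℕ) → Ω → ℝ := fun n ω =>
      dotProduct (fun i : Fin n => v i ω) ((B n).mulVec fun i : Fin n => v i ω)
    (∀ n : ℕ, variance (Qf n) volume ≤ (|μ4 - 3 * σ2 ^ 2| + 2 * σ2 ^ 2) * c ^ 2 * n)
    ∧ (∀ n : ℕ, (∫ ω, ((1 / (n : ℝ)) * (Qf n ω - σ2 * Matrix.trace (B n))) ^ 2)
        ≤ (|μ4 - 3 * σ2 ^ 2| + 2 * σ2 ^ 2) * c ^ 2 / n)
    ∧ Tendsto (fun n : ℕ => ∫ ω, ((1 / (n : ℝ)) * (Qf n ω - σ2 * Matrix.trace (B n))) ^ 2)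
        atTop (nhds 0)
    ∧ TendstoInMeasure volume
        (fun (n : ℕ) ω => (1 / (n : ℝ)) * (Qf n ω - σ2 * Matrix.trace (B n))) atTop 0 := by
  intro Qf
  have hw (n : ℕ) : iIndepFun (fun i : Fin n => v i) volume := hindep.precomp Fin.val_injective
  have hQ (n : ℕ) : MemLp (Qf n) 2 volume := memLp_dotProduct_mulVec
    (w := fun i : Fin n => v i) (fun i => hL4 i) (B n)
  have hmeanQ (n : ℕ) : ∫ ω, Qf n ω = σ2 * trace (B n) := integral_dotProduct_mulVec (hw n)
    (fun i => hL4 i) (fun i => hmean i) (fun i => hvar i) (B n)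
  have hvarQ (n : ℕ) : Var[Qf n; volume] ≤ (|μ4 - 3 * σ2 ^ 2| + 2 * σ2 ^ 2) * c ^ 2 * n := by
    simpa using variance_dotProduct_mulVec_le (hw n) (fun i => hL4 i) (fun i => hmean i)
      (fun i => hvar i) (B n) (fun i => hm4 i) (hBinf n)
  have hL2 (n : ℕ) : ∫ ω, ((1 / (n : ℝ)) * (Qf n ω - σ2 * trace (B n))) ^ 2
      ≤ (|μ4 - 3 * σ2 ^ 2| + 2 * σ2 ^ 2) * c ^ 2 / n := by
    rw [← hmeanQ, integral_sq_const_mul_sub_integral (hQ n).aemeasurable]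
    refine (mul_le_mul_of_nonneg_left (hvarQ n) (sq_nonneg _)).trans_eq ?_
    rcases eq_or_ne (n : ℝ) 0 with hn | hn
    · simp [hn]
    · field_simp
  have hlim := squeeze_zero (fun n => integral_nonneg fun ω => sq_nonneg _) hL2
    (tendsto_const_div_atTop_nhds_zero_nat _)
  exact ⟨hvarQ, hL2, hlim, tendstoInMeasure_zero_of_tendsto_integral_sq
    (fun n => ((hQ n).sub (memLp_const _)).const_mul _) hlim⟩

/-- L² law of large numbers for quadratic forms with uniformly bounded matrices: if
`‖B_n‖_1 ≤ c` and `‖B_n‖_∞ ≤ c` for all `n` and the `v_i` are i.i.d. with mean `0`,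
variance `σ²` and fourth moment `μ₄ < ∞`, then
`Var(V_n'B_nV_n) ≤ (|μ₄ − 3σ⁴| + 2σ⁴)c²n`, hence
`E[((1/n)(V_n'B_nV_n − σ²tr B_n))²] ≤ (|μ₄ − 3σ⁴| + 2σ⁴)c²/n → 0`, and in particular
`(1/n)(V_n'B_nV_n − σ²tr B_n) → 0` in probability. -/
theorem lln_quadratic_forms
    {Ω : Type*} [MeasureSpace Ω] [IsProbabilityMeasure (volume : Measure Ω)]
    (v : ℕ → Ω → ℝ) (σ2 μ4 c : ℝ)
    (hmeas : ∀ i, Measurable (v i))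
    (hindep : iIndepFun v volume)
    (hident : ∀ i j, IdentDistrib (v i) (v j) volume volume)
    (hL4 : ∀ i, MemLp (v i) 4 volume)
    (hmean : ∀ i, (∫ ω, v i ω) = 0)
    (hvar : ∀ i, (∫ ω, (v i ω) ^ 2) = σ2)
    (hm4 : ∀ i, (∫ ω, (v i ω) ^ 4) = μ4)
    (B : (n : ℕ) → Matrix (Fin n) (Fin n) ℝ)
    (hB1 : ∀ n, colSumNorm (B n) ≤ c)
    (hBinf : ∀ n, rowSumNorm (B n) ≤ c) :
    let Qf : (n : ℕ) → Ω → ℝ := fun n ω =>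
      dotProduct (fun i : Fin n => v i ω) ((B n).mulVec fun i : Fin n => v i ω)
    (∀ n : ℕ, variance (Qf n) volume ≤ (|μ4 - 3 * σ2 ^ 2| + 2 * σ2 ^ 2) * c ^ 2 * n)
    ∧ (∀ n : ℕ, (∫ ω, ((1 / (n : ℝ)) * (Qf n ω - σ2 * Matrix.trace (B n))) ^ 2)
        ≤ (|μ4 - 3 * σ2 ^ 2| + 2 * σ2 ^ 2) * c ^ 2 / n)
    ∧ Tendsto (fun n : ℕ => ∫ ω, ((1 / (n : ℝ)) * (Qf n ω - σ2 * Matrix.trace (B n))) ^ 2)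
        atTop (nhds 0)
    ∧ TendstoInMeasure volume
        (fun (n : ℕ) ω => (1 / (n : ℝ)) * (Qf n ω - σ2 * Matrix.trace (B n))) atTop 0 :=
  lln_quadratic_forms_general v σ2 μ4 c hindep hL4 hmean hvar hm4 B hBinf
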